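/- arXiv:2407.09377 — 3 statements merged into one kernel-verified Lean document; each statement's English description precedes it below -/
import Mathlib

section
/- Let ν ≥ 2, N ∈ ℕ, δ ∈ (0,1), ε > 0, M = δ^{-ε} ∈ ℕ, and suppose nonnegative integers R₁,...,R_M satisfy R_j ≤ N^{ν−1} M for each j and the weighted constraint Σ_{j=1}^{M} j² R_j ≤ δ^{1−ε/2} N^{ν+2}. Then the total Σ_{j=1}^{M} R_j is maximized (among all feasible choices) by taking R_j = N^{ν−1}M for j = 1,...,ℓ and R_j = 0 otherwise for a suitable ℓ, and in general Σ_{j=1}^{M} R_j ≤ C δ^{1/3 − 5ε/6} N^ν for a constant C depending only on ν. -/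
/-- Discrete optimization of Step 2: if nonnegative integers `R_j` satisfy the capacity
constraint `R_j ≤ N^{ν-1} M` and the weighted constraint `Σ j² R_j ≤ δ^{1-ε/2} N^{ν+2}`,
with `M = δ^{-ε}`, then `Σ R_j ≤ C δ^{1/3 - 5ε/6} N^ν` with `C` depending only on `ν`. -/
theorem stmt4 (ν : ℕ) (hν : 2 ≤ ν) :
    ∃ C : ℝ, 0 < C ∧ ∀ (N M : ℕ) (δ ε : ℝ) (R : ℕ → ℕ),
      0 < N → 0 < δ → δ < 1 → 0 < ε → (M : ℝ) = δ ^ (-ε) →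
      (∀ j ∈ Finset.Icc 1 M, (R j : ℝ) ≤ (N : ℝ) ^ (ν - 1) * M) →
      (∑ j ∈ Finset.Icc 1 M, (j : ℝ) ^ 2 * (R j : ℝ)) ≤ δ ^ (1 - ε / 2) * (N : ℝ) ^ (ν + 2) →
      (∑ j ∈ Finset.Icc 1 M, (R j : ℝ)) ≤ C * δ ^ (1 / 3 - 5 * ε / 6) * (N : ℝ) ^ ν := by
  refine ⟨2, by norm_num, ?_⟩
  intro N M δ ε R hN hδ hδ1 hε hM hcap hW
  set x : ℝ := δ ^ ((1:ℝ)/3 + ε/6) * N with hxdef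
  have hNpos : (0:ℝ) < N := by exact_mod_cast hN
  have hxpos : 0 < x := mul_pos (Real.rpow_pos_of_pos hδ _) hNpos
  set ℓ : ℕ := ⌊x⌋₊ with hℓ
  have hMpos : (0:ℝ) < M := hM ▸ Real.rpow_pos_of_pos hδ _
  have hcapnn : (0:ℝ) ≤ (N:ℝ)^(ν-1) * M := by positivity
  -- Part A: low indices
  have hA : ∑ j ∈ (Finset.Icc 1 M).filter (fun j => j ≤ ℓ), (R j:ℝ)
      ≤ x * ((N:ℝ)^(ν-1)*M) := by
    calc ∑ j ∈ (Finset.Icc 1 M).filter (fun j => j ≤ ℓ), (R j:ℝ)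
        ≤ ((Finset.Icc 1 M).filter (fun j => j ≤ ℓ)).card • ((N:ℝ)^(ν-1)*M) := by
          apply Finset.sum_le_card_nsmul
          intro j hj
          exact hcap j (Finset.mem_filter.mp hj).1
      _ ≤ ℓ • ((N:ℝ)^(ν-1)*M) := by
          apply nsmul_le_nsmul_left hcapnn
          calc ((Finset.Icc 1 M).filter (fun j => j ≤ ℓ)).card
              ≤ (Finset.Icc 1 ℓ).card := Finset.card_le_card (by
                intro j hj
                simp only [Finset.mem_filter, Finset.mem_Icc] at *
                omega)
            _ ≤ ℓ := by simp
      _ = (ℓ:ℝ) * ((N:ℝ)^(ν-1)*M) := by simp [nsmul_eq_mul]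
      _ ≤ x * ((N:ℝ)^(ν-1)*M) :=
          mul_le_mul_of_nonneg_right (Nat.floor_le hxpos.le) hcapnn
  -- Part B: high indices
  have hB : x^2 * ∑ j ∈ (Finset.Icc 1 M).filter (fun j => ¬ j ≤ ℓ), (R j:ℝ)
      ≤ δ ^ (1-ε/2) * (N:ℝ)^(ν+2) := by
    calc x^2 * ∑ j ∈ (Finset.Icc 1 M).filter (fun j => ¬ j ≤ ℓ), (R j:ℝ)
        = ∑ j ∈ (Finset.Icc 1 M).filter (fun j => ¬ j ≤ ℓ), x^2 * (R j:ℝ) :=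
          Finset.mul_sum _ _ _
      _ ≤ ∑ j ∈ (Finset.Icc 1 M).filter (fun j => ¬ j ≤ ℓ), (j:ℝ)^2 * (R j:ℝ) := by
          apply Finset.sum_le_sum
          intro j hj
          have hjℓ : ℓ < j := by
            have := (Finset.mem_filter.mp hj).2
            omega
          have hxj : x ≤ (j:ℝ) := by
            have h1 : x < (ℓ:ℝ) + 1 := Nat.lt_floor_add_one x
            have h2 : (ℓ:ℝ) + 1 ≤ (j:ℝ) := by exact_mod_cast hjℓ
            linarith
          exact mul_le_mul_of_nonneg_right
            (pow_le_pow_left₀ hxpos.le hxj 2) (Nat.cast_nonneg _)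
      _ ≤ ∑ j ∈ Finset.Icc 1 M, (j:ℝ)^2 * (R j:ℝ) := by
          apply Finset.sum_le_sum_of_subset_of_nonneg (Finset.filter_subset _ _)
          intro j _ _
          positivity
      _ ≤ δ ^ (1-ε/2) * (N:ℝ)^(ν+2) := hW
  -- Exponent computations
  have hNν : (N:ℝ)^ν = (N:ℝ) * (N:ℝ)^(ν-1) := by
    rw [← pow_succ']
    congr 1
    omega
  have e1 : δ ^ ((1:ℝ)/3+ε/6) * δ ^ (-ε) = δ ^ ((1:ℝ)/3 - 5*ε/6) := by
    rw [← Real.rpow_add hδ]; congr 1; ring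
  have h1 : x * ((N:ℝ)^(ν-1)*M) = δ ^ ((1:ℝ)/3 - 5*ε/6) * (N:ℝ)^ν := by
    rw [hM, hxdef, hNν, ← e1]; ring
  have hx2 : x^2 = δ ^ ((2:ℝ)/3 + ε/3) * (N:ℝ)^2 := by
    have h : (δ ^ ((1:ℝ)/3+ε/6))^2 = δ ^ ((2:ℝ)/3+ε/3) := by
      rw [sq, ← Real.rpow_add hδ]
      ring_nf
    rw [hxdef, mul_pow, h]
  have e2 : δ ^ ((1:ℝ)/3-5*ε/6) * δ ^ ((2:ℝ)/3+ε/3) = δ ^ ((1:ℝ)-ε/2) := by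
    rw [← Real.rpow_add hδ]; congr 1; ring
  have h2 : δ ^ (1-ε/2) * (N:ℝ)^(ν+2) / x^2 = δ ^ ((1:ℝ)/3 - 5*ε/6) * (N:ℝ)^ν := by
    rw [div_eq_iff (by positivity), hx2, ← e2, pow_add]; ring
  -- Combine
  have hBdiv : ∑ j ∈ (Finset.Icc 1 M).filter (fun j => ¬ j ≤ ℓ), (R j:ℝ)
      ≤ δ ^ (1-ε/2) * (N:ℝ)^(ν+2) / x^2 := by
    rw [le_div_iff₀ (by positivity)]
    linarith [hB]
  have hsplit := Finset.sum_filter_add_sum_filter_not (Finset.Icc 1 M)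
    (fun j => j ≤ ℓ) (fun j => (R j : ℝ))
  have hgoal : (1:ℝ)/3 - 5*ε/6 = 1/3 - 5*ε/6 := by ring
  calc ∑ j ∈ Finset.Icc 1 M, (R j:ℝ)
      = (∑ j ∈ (Finset.Icc 1 M).filter (fun j => j ≤ ℓ), (R j:ℝ))
        + ∑ j ∈ (Finset.Icc 1 M).filter (fun j => ¬ j ≤ ℓ), (R j:ℝ) := hsplit.symm
    _ ≤ x * ((N:ℝ)^(ν-1)*M) + δ ^ (1-ε/2) * (N:ℝ)^(ν+2) / x^2 := add_le_add hA hBdiv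
    _ = 2 * δ ^ (1/3 - 5*ε/6) * (N:ℝ)^ν := by rw [h1, h2]; ring
end

section
/- Let A be an array of ℓ(A) cubes of the tiling R_N, and consider the 'reversal of the first and last M entries' permutation sending the configuration [1,2,...,M, M+1,...,ℓ−M, ℓ−M+1,...,ℓ] to [ℓ, ℓ−1,...,ℓ−M+1, M+1,..., ℓ−M, M, M−1,...,1] (M ≤ ℓ/2). Then there exists a sequence of S-elementary movements realizing this permutation with total Shnirelman cost at most √2 · ℓ(A) · √M · N^{-1-ν/2}. -/
/-!
The cubes of the two outer blocks follow the odd–even transposition schedule that reverses the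
whole array in `ℓ` rounds: in round `t` the pairs of places `(p, p + 1)` with `p ≡ t (mod 2)` may
be exchanged, so a cube starting at an even place walks right one place per round, waits one round
at the right end and walks back, and a cube starting at an odd place does the same to the left.
A middle cube never moves by itself: it is pushed one place left by each of the `M` cubes of the
left block as they overtake it, and later one place right by each cube of the right block, so it
comes back home. Every move is an exchange of neighbours and two middle cubes are never exchanged,
so each of the `ℓ` rounds consists of at most `2M` swaps, each containing an outer cube, and costs
at most `N^{-1-ν/2} √(2M)`.
-/

/-- A permutation of `Fin ℓ` consisting of simultaneous disjoint adjacent transpositions. -/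
def IsSimulAdjSwaps {ℓ : ℕ} (σ : Equiv.Perm (Fin ℓ)) : Prop :=
  ∀ i, σ (σ i) = i ∧ (σ i = i ∨ ((σ i : ℕ) = (i : ℕ) + 1) ∨ ((i : ℕ) = (σ i : ℕ) + 1))

/-- The number of pairs simultaneously swapped. -/
def swapCount {ℓ : ℕ} (σ : Equiv.Perm (Fin ℓ)) : ℕ :=
  (Finset.univ.filter fun i => σ i ≠ i).card / 2

open Function Finset

/-- `pos t x` is the place after `t` rounds of the cube that starts at place `x`. -/
structure SwapSchedule (ℓ : ℕ) where
  pos : ℕ → Fin ℓ → Fin ℓ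
  pos_zero : pos 0 = id
  adjacent : ∀ t x, (pos (t + 1) x : ℕ) = pos t x ∨ (pos (t + 1) x : ℕ) = pos t x + 1 ∨
    (pos t x : ℕ) = pos (t + 1) x + 1
  swap : ∀ t x y, pos (t + 1) x = pos t y → pos (t + 1) y = pos t x

namespace SwapSchedule

variable {ℓ : ℕ} (S : SwapSchedule ℓ)

theorem involutive_pos_succ_comp_symm (t : ℕ) (e : Equiv.Perm (Fin ℓ)) (he : ⇑e = S.pos t) :
    Involutive (S.pos (t + 1) ∘ e.symm) := by
  intro q
  have hy : S.pos t (e.symm (S.pos (t + 1) (e.symm q))) = S.pos (t + 1) (e.symm q) := by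
    rw [← he, e.apply_symm_apply]
  simp only [comp_apply]
  rw [S.swap t _ _ hy.symm, ← he, e.apply_symm_apply]

theorem bijective_pos (t : ℕ) : Bijective (S.pos t) := by
  induction t with
  | zero => exact S.pos_zero ▸ bijective_id
  | succ t ih =>
    set e := Equiv.ofBijective _ ih
    have h : S.pos (t + 1) = (S.pos (t + 1) ∘ e.symm) ∘ e := by
      ext x; simp
    rw [h]
    exact (S.involutive_pos_succ_comp_symm t e rfl).bijective.comp e.bijective

noncomputable def perm (t : ℕ) : Equiv.Perm (Fin ℓ) := Equiv.ofBijective _ (S.bijective_pos t)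

noncomputable def round (t : ℕ) : Equiv.Perm (Fin ℓ) := S.perm (t + 1) * (S.perm t)⁻¹

theorem coe_round (t : ℕ) : ⇑(S.round t) = S.pos (t + 1) ∘ (S.perm t).symm := rfl

theorem round_pos (t : ℕ) (x : Fin ℓ) : S.round t (S.pos t x) = S.pos (t + 1) x := by
  simp [round, perm]

theorem isSimulAdjSwaps_round (t : ℕ) : IsSimulAdjSwaps (S.round t) := by
  intro q
  obtain ⟨x, rfl⟩ := (S.bijective_pos t).surjective q
  refine ⟨?_, ?_⟩
  · rw [coe_round]; exact S.involutive_pos_succ_comp_symm t _ rfl _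
  · rw [round_pos, ← Fin.val_inj]; exact S.adjacent t x

theorem prod_rounds (T : ℕ) : ((List.range T).map S.round).reverse.prod = S.perm T := by
  induction T with
  | zero =>
    ext x
    simp [perm, S.pos_zero]
  | succ T ih =>
    rw [List.range_succ, List.map_append, List.reverse_append]
    simp [ih, round]

end SwapSchedule

theorem swapCount_le_card {ℓ : ℕ} (τ : Equiv.Perm (Fin ℓ)) (hτ : Involutive τ)
    (B : Finset (Fin ℓ)) (hB : ∀ q, τ q ≠ q → q ∈ B ∨ τ q ∈ B) : swapCount τ ≤ #B := by
  have hsub : univ.filter (fun q => τ q ≠ q) ⊆ B ∪ B.image τ := by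
    intro q hq
    rcases hB q (mem_filter.mp hq).2 with h | h
    · exact mem_union_left _ h
    · exact mem_union_right _ (mem_image.mpr ⟨τ q, h, hτ q⟩)
  have := (card_le_card hsub).trans ((card_union_le _ _).trans (add_le_add_right card_image_le _))
  unfold swapCount
  omega

theorem sum_map_mul_sqrt_le {ι : Type*} (L : List ι) (f : ι → ℕ) {c : ℝ} (hc : 0 ≤ c) {K : ℕ}
    (hK : ∀ i ∈ L, f i ≤ K) :
    (L.map fun i => c * Real.sqrt (f i)).sum ≤ L.length * (c * Real.sqrt K) := by
  have := List.sum_le_card_nsmul (L.map fun i => c * Real.sqrt (f i)) (c * Real.sqrt K) <| by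
    simp only [List.mem_map]
    rintro _ ⟨i, hi, rfl⟩
    gcongr
    exact_mod_cast hK i hi
  simpa using this

theorem card_filter_lt_or_sub_le (ℓ M : ℕ) :
    #{x : Fin ℓ | (x : ℕ) < M ∨ ℓ - M ≤ (x : ℕ)} ≤ 2 * M :=
  calc _ ≤ #(range M ∪ Ico (ℓ - M) ℓ) :=
        card_le_card_of_injOn Fin.val (fun x hx => by simp at hx ⊢; omega) Fin.val_injective.injOn
    _ ≤ #(range M) + #(Ico (ℓ - M) ℓ) := card_union_le _ _
    _ ≤ 2 * M := by simp only [card_range, Nat.card_Ico]; omega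

/-- The place after `t` rounds of the cube starting at `x`. A middle cube in the left half is
pushed left during the rounds `[x + 1 - M - M % 2, x + 1 - M % 2)` and right during the `M` rounds
from `ℓ - x - (ℓ + M) % 2` on; in the right half the two phases come in the opposite order. -/
def reversalPos (ℓ M t x : ℕ) : ℕ :=
  if x < M ∨ ℓ - M ≤ x then
    if x % 2 = 0 then min (x + t) (2 * ℓ - 1 - (x + t))
    else max (x - t) (t - x - 1)
  else if 2 * x + 2 ≤ ℓ + M % 2 then
    x - min M (t - (x - M + 1 - M % 2)) + min M (t - (ℓ - x - (ℓ + M) % 2))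
  else
    x + min M (t - (ℓ - M - x - (ℓ + M) % 2)) - min M (t - (x + 1 - M % 2))

theorem reversalPos_lt {ℓ M t x : ℕ} (hℓ : 2 * M ≤ ℓ) (hx : x < ℓ) (ht : t ≤ ℓ) :
    reversalPos ℓ M t x < ℓ := by
  unfold reversalPos; split_ifs <;> omega

theorem reversalPos_zero {ℓ M x : ℕ} (hℓ : 2 * M ≤ ℓ) (hx : x < ℓ) :
    reversalPos ℓ M 0 x = x := by
  unfold reversalPos; split_ifs <;> omega

theorem reversalPos_self {ℓ M x : ℕ} (hℓ : 2 * M ≤ ℓ) (hx : x < ℓ) :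
    reversalPos ℓ M ℓ x = if x < M ∨ ℓ - M ≤ x then ℓ - 1 - x else x := by
  unfold reversalPos; split_ifs <;> omega

/-! The phase tables below give `(reversalPos ℓ M t x, reversalPos ℓ M (t + 1) x)` as explicit
linear expressions, case by case; comparing two cubes is then a linear case analysis that `omega`
can carry out, whereas on the closed formula it blows up. -/

def OuterEvenMove (ℓ t x p q : ℕ) : Prop :=
  (x + t + 1 < ℓ ∧ p = x + t ∧ q = x + t + 1) ∨
  (x + t + 1 = ℓ ∧ p = ℓ - 1 ∧ q = ℓ - 1) ∨
  (ℓ ≤ x + t ∧ p = 2 * ℓ - 1 - (x + t) ∧ q = 2 * ℓ - 2 - (x + t))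

def OuterOddMove (t x p q : ℕ) : Prop :=
  (t < x ∧ p = x - t ∧ q = x - t - 1) ∨
  (t = x ∧ p = 0 ∧ q = 0) ∨
  (x < t ∧ p = t - x - 1 ∧ q = t - x)

def LeftMiddleMove (ℓ M t x p q : ℕ) : Prop :=
  (t < x - M + 1 - M % 2 ∧ p = x ∧ q = x) ∨
  (x - M + 1 - M % 2 ≤ t ∧ t < x + 1 - M % 2 ∧
    p = x - (t - (x - M + 1 - M % 2)) ∧ q = x - (t - (x - M + 1 - M % 2)) - 1) ∨
  (x + 1 - M % 2 ≤ t ∧ t < ℓ - x - (ℓ + M) % 2 ∧ p = x - M ∧ q = x - M) ∨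
  (ℓ - x - (ℓ + M) % 2 ≤ t ∧ t < ℓ - x - (ℓ + M) % 2 + M ∧
    p = x - M + (t - (ℓ - x - (ℓ + M) % 2)) ∧ q = x - M + (t - (ℓ - x - (ℓ + M) % 2)) + 1) ∨
  (ℓ - x - (ℓ + M) % 2 + M ≤ t ∧ p = x ∧ q = x)

def RightMiddleMove (ℓ M t x p q : ℕ) : Prop :=
  (t < ℓ - M - x - (ℓ + M) % 2 ∧ p = x ∧ q = x) ∨
  (ℓ - M - x - (ℓ + M) % 2 ≤ t ∧ t < ℓ - x - (ℓ + M) % 2 ∧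
    p = x + (t - (ℓ - M - x - (ℓ + M) % 2)) ∧ q = x + (t - (ℓ - M - x - (ℓ + M) % 2)) + 1) ∨
  (ℓ - x - (ℓ + M) % 2 ≤ t ∧ t < x + 1 - M % 2 ∧ p = x + M ∧ q = x + M) ∨
  (x + 1 - M % 2 ≤ t ∧ t < x + 1 - M % 2 + M ∧
    p = x + M - (t - (x + 1 - M % 2)) ∧ q = x + M - (t - (x + 1 - M % 2)) - 1) ∨
  (x + 1 - M % 2 + M ≤ t ∧ p = x ∧ q = x)

def ReversalMove (ℓ M t x p q : ℕ) : Prop :=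
  ((x < M ∨ ℓ - M ≤ x) ∧ x % 2 = 0 ∧ OuterEvenMove ℓ t x p q) ∨
  ((x < M ∨ ℓ - M ≤ x) ∧ x % 2 = 1 ∧ OuterOddMove t x p q) ∨
  (M ≤ x ∧ x + M < ℓ ∧ 2 * x + 2 ≤ ℓ + M % 2 ∧ LeftMiddleMove ℓ M t x p q) ∨
  (M ≤ x ∧ x + M < ℓ ∧ ℓ + M % 2 < 2 * x + 2 ∧ RightMiddleMove ℓ M t x p q)

section ReversalMove

variable {ℓ M t x : ℕ}

theorem outerEvenMove_reversalPos (h : x < M ∨ ℓ - M ≤ x) (hx : x % 2 = 0) :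
    OuterEvenMove ℓ t x (reversalPos ℓ M t x) (reversalPos ℓ M (t + 1) x) := by
  simp only [OuterEvenMove, reversalPos, if_pos h, if_pos hx]
  omega

theorem outerOddMove_reversalPos (h : x < M ∨ ℓ - M ≤ x) (hx : x % 2 = 1) :
    OuterOddMove t x (reversalPos ℓ M t x) (reversalPos ℓ M (t + 1) x) := by
  simp only [OuterOddMove, reversalPos, if_pos h, if_neg (by omega : ¬x % 2 = 0)]
  omega

theorem leftMiddleMove_reversalPos (h : ¬(x < M ∨ ℓ - M ≤ x)) (hleft : 2 * x + 2 ≤ ℓ + M % 2) :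
    LeftMiddleMove ℓ M t x (reversalPos ℓ M t x) (reversalPos ℓ M (t + 1) x) := by
  simp only [LeftMiddleMove, reversalPos, if_neg h, if_pos hleft]
  rcases Nat.lt_or_ge t (x - M + 1 - M % 2) with h₁ | h₁
  · left; omega
  rcases Nat.lt_or_ge t (x + 1 - M % 2) with h₂ | h₂
  · right; left; omega
  rcases Nat.lt_or_ge t (ℓ - x - (ℓ + M) % 2) with h₃ | h₃
  · right; right; left; omega
  rcases Nat.lt_or_ge t (ℓ - x - (ℓ + M) % 2 + M) with h₄ | h₄
  · right; right; right; left; omega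
  · right; right; right; right; omega

theorem rightMiddleMove_reversalPos (h : ¬(x < M ∨ ℓ - M ≤ x))
    (hright : ¬2 * x + 2 ≤ ℓ + M % 2) :
    RightMiddleMove ℓ M t x (reversalPos ℓ M t x) (reversalPos ℓ M (t + 1) x) := by
  simp only [RightMiddleMove, reversalPos, if_neg h, if_neg hright]
  rcases Nat.lt_or_ge t (ℓ - M - x - (ℓ + M) % 2) with h₁ | h₁
  · left; omega
  rcases Nat.lt_or_ge t (ℓ - x - (ℓ + M) % 2) with h₂ | h₂
  · right; left; omega
  rcases Nat.lt_or_ge t (x + 1 - M % 2) with h₃ | h₃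
  · right; right; left; omega
  rcases Nat.lt_or_ge t (x + 1 - M % 2 + M) with h₄ | h₄
  · right; right; right; left; omega
  · right; right; right; right; omega

theorem reversalMove_reversalPos (hx : x < ℓ) :
    ReversalMove ℓ M t x (reversalPos ℓ M t x) (reversalPos ℓ M (t + 1) x) := by
  by_cases h : x < M ∨ ℓ - M ≤ x
  · rcases Nat.mod_two_eq_zero_or_one x with hx | hx
    · exact Or.inl ⟨h, hx, outerEvenMove_reversalPos h hx⟩
    · exact Or.inr <| Or.inl ⟨h, hx, outerOddMove_reversalPos h hx⟩
  · by_cases hleft : 2 * x + 2 ≤ ℓ + M % 2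
    · exact Or.inr <| Or.inr <| Or.inl ⟨by omega, by omega, hleft,
        leftMiddleMove_reversalPos h hleft⟩
    · exact Or.inr <| Or.inr <| Or.inr ⟨by omega, by omega, by omega,
        rightMiddleMove_reversalPos h hleft⟩

variable {p q : ℕ}

theorem ReversalMove.adjacent (H : ReversalMove ℓ M t x p q) : q = p ∨ q = p + 1 ∨ p = q + 1 := by
  simp only [ReversalMove, OuterEvenMove, OuterOddMove, LeftMiddleMove, RightMiddleMove] at H
  omega

set_option maxHeartbeats 4000000 in
theorem ReversalMove.swap {y p' q' : ℕ} (ht : t < ℓ) (hx : x < ℓ) (hy : y < ℓ)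
    (Hx : ReversalMove ℓ M t x p q) (Hy : ReversalMove ℓ M t y p' q') (h : q = p') : q' = p := by
  simp only [ReversalMove, OuterEvenMove, OuterOddMove, LeftMiddleMove, RightMiddleMove] at Hx Hy
  rcases Hx with Hx | Hx | Hx | Hx <;> rcases Hy with Hy | Hy | Hy | Hy <;> omega

set_option maxHeartbeats 4000000 in
theorem ReversalMove.eq_of_middle {y p' q' : ℕ} (ht : t < ℓ)
    (hx : ¬(x < M ∨ ℓ - M ≤ x)) (hy : ¬(y < M ∨ ℓ - M ≤ y))
    (Hx : ReversalMove ℓ M t x p q) (Hy : ReversalMove ℓ M t y p' q') (h : q = p') : x = y := by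
  simp only [ReversalMove, LeftMiddleMove, RightMiddleMove] at Hx Hy
  rcases Hx with Hx | Hx | Hx | Hx <;> rcases Hy with Hy | Hy | Hy | Hy <;> omega

end ReversalMove

theorem min_succ_cases (t ℓ : ℕ) :
    min t ℓ < ℓ ∧ min (t + 1) ℓ = min t ℓ + 1 ∨ min (t + 1) ℓ = min t ℓ := by
  omega

/-- The rounds after the `ℓ`-th are idle. -/
def reversalSchedule {ℓ M : ℕ} (hℓ : 2 * M ≤ ℓ) : SwapSchedule ℓ where
  pos t x := ⟨reversalPos ℓ M (min t ℓ) x, reversalPos_lt hℓ x.2 (min_le_right t ℓ)⟩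
  pos_zero := by
    funext x
    exact Fin.ext (by simpa using reversalPos_zero hℓ x.2)
  adjacent t x := by
    rcases min_succ_cases t ℓ with ⟨-, h⟩ | h
    · simp only [h]; exact (reversalMove_reversalPos x.2).adjacent
    · simp [h]
  swap t x y h := by
    rw [Fin.ext_iff] at h ⊢
    rcases min_succ_cases t ℓ with ⟨ht, h'⟩ | h' <;> simp only [h'] at h ⊢
    · exact (reversalMove_reversalPos x.2).swap ht x.2 y.2 (reversalMove_reversalPos y.2) h
    · exact h.symm

section reversalSchedule

variable {ℓ M : ℕ} (hℓ : 2 * M ≤ ℓ)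

theorem reversalSchedule_perm_length (σ : Equiv.Perm (Fin ℓ))
    (hσ1 : ∀ i : Fin ℓ, ((i : ℕ) < M ∨ ℓ - M ≤ (i : ℕ)) → (σ i : ℕ) = ℓ - 1 - (i : ℕ))
    (hσ2 : ∀ i : Fin ℓ, M ≤ (i : ℕ) → (i : ℕ) < ℓ - M → σ i = i) :
    (reversalSchedule hℓ).perm ℓ = σ := by
  ext x
  change reversalPos ℓ M (min ℓ ℓ) x = σ x
  rw [min_self, reversalPos_self hℓ x.2]
  split_ifs with h
  · exact (hσ1 x h).symm
  · rw [hσ2 x (by omega) (by omega)]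

theorem swapCount_round_reversalSchedule_le {t : ℕ} (ht : t < ℓ) :
    swapCount ((reversalSchedule hℓ).round t) ≤ 2 * M := by
  set S := reversalSchedule hℓ
  have hS (s : ℕ) (x : Fin ℓ) : (S.pos s x : ℕ) = reversalPos ℓ M (min s ℓ) x := rfl
  let outer : Finset (Fin ℓ) := {x | (x : ℕ) < M ∨ ℓ - M ≤ (x : ℕ)}
  refine (swapCount_le_card _ (fun q => ((S.isSimulAdjSwaps_round t) q).1)
    (outer.image (S.pos t)) ?_).trans (card_image_le.trans (card_filter_lt_or_sub_le ℓ M))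
  intro q hq
  obtain ⟨x, rfl⟩ := (S.bijective_pos t).surjective q
  obtain ⟨y, hy⟩ := (S.bijective_pos t).surjective (S.pos (t + 1) x)
  rw [S.round_pos] at hq ⊢
  by_contra! hB
  simp only [mem_image, not_exists, not_and, outer, mem_filter, mem_univ, true_and] at hB
  have hxy : x = y := Fin.ext <| (reversalMove_reversalPos (t := t) x.2).eq_of_middle ht
    (fun h => hB.1 x h rfl) (fun h => hB.2 y h hy) (reversalMove_reversalPos y.2) <| by
      have := congrArg Fin.val hy
      rw [hS, hS, min_eq_left ht.le, min_eq_left ht] at this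
      exact this.symm
  exact hq (hxy ▸ hy.symm)

end reversalSchedule

theorem stmt11_general (ν N ℓ M : ℕ) (hℓ : 2 * M ≤ ℓ)
    (σ : Equiv.Perm (Fin ℓ))
    (hσ1 : ∀ i : Fin ℓ, ((i : ℕ) < M ∨ ℓ - M ≤ (i : ℕ)) → (σ i : ℕ) = ℓ - 1 - (i : ℕ))
    (hσ2 : ∀ i : Fin ℓ, M ≤ (i : ℕ) → (i : ℕ) < ℓ - M → σ i = i) :
    ∃ L : List (Equiv.Perm (Fin ℓ)),
      (∀ τ ∈ L, IsSimulAdjSwaps τ) ∧ L.prod = σ ∧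
      (L.map fun τ => (N : ℝ) ^ (-1 - (ν : ℝ) / 2) * Real.sqrt (swapCount τ)).sum
        ≤ Real.sqrt 2 * (ℓ : ℝ) * Real.sqrt M * (N : ℝ) ^ (-1 - (ν : ℝ) / 2) := by
  set S := reversalSchedule hℓ
  refine ⟨((List.range ℓ).map S.round).reverse, ?_,
    by rw [S.prod_rounds, reversalSchedule_perm_length hℓ σ hσ1 hσ2], ?_⟩
  · simp only [List.mem_reverse, List.mem_map]
    rintro _ ⟨t, -, rfl⟩
    exact S.isSimulAdjSwaps_round t
  · have hc : 0 ≤ (N : ℝ) ^ (-1 - (ν : ℝ) / 2) := by positivity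
    refine (sum_map_mul_sqrt_le _ swapCount hc (K := 2 * M) ?_).trans_eq ?_
    · simp only [List.mem_reverse, List.mem_map, List.mem_range]
      rintro _ ⟨t, ht, rfl⟩
      exact swapCount_round_reversalSchedule_le hℓ ht
    · simp only [List.length_reverse, List.length_map, List.length_range]
      push_cast
      rw [Real.sqrt_mul zero_le_two]
      ring

/-- The permutation of an array of `ℓ` cubes exchanging (and reversing) the first and last
blocks of `M` cubes while fixing the middle can be realized by a sequence of S-elementary
movements of total Shnirelman cost at most `√2 · ℓ · √M · N^{-1-ν/2}`. -/
theorem stmt11 (ν N ℓ M : ℕ) (hN : 0 < N) (hM : 1 ≤ M) (hℓ : 2 * M ≤ ℓ)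
    (σ : Equiv.Perm (Fin ℓ))
    (hσ1 : ∀ i : Fin ℓ, ((i : ℕ) < M ∨ ℓ - M ≤ (i : ℕ)) → (σ i : ℕ) = ℓ - 1 - (i : ℕ))
    (hσ2 : ∀ i : Fin ℓ, M ≤ (i : ℕ) → (i : ℕ) < ℓ - M → σ i = i) :
    ∃ L : List (Equiv.Perm (Fin ℓ)),
      (∀ τ ∈ L, IsSimulAdjSwaps τ) ∧ L.prod = σ ∧
      (L.map fun τ => (N : ℝ) ^ (-1 - (ν : ℝ) / 2) * Real.sqrt (swapCount τ)).sum
        ≤ Real.sqrt 2 * (ℓ : ℝ) * Real.sqrt M * (N : ℝ) ^ (-1 - (ν : ℝ) / 2) :=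
  stmt11_general ν N ℓ M hℓ σ hσ1 hσ2
end

section
/- Let P be a permutation of the tiling R_N of [0,1]^ν that is constant on the coarser tiling R_{1/h} with h = δ^ε (i.e. for each coarse cube K of side δ^ε, every fine cube κ ⊂ K satisfies P(κ) ⊂ K). Then the Shnirelman discrete distance from P to the identity satisfies dist^S_{D_N}(P, Id) ≤ C(ν) δ^ε, where C(ν) depends only on ν. -/
/-!
A flow of `R` rounds costs at most `R / N`, because a round swaps at most `N ^ ν` pairs. So it
suffices to realize `P⁻¹` in `O(m)` rounds, and since `P` preserves every coarse cube, the flows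
inside the coarse cubes (copies of the grid `[m]^ν`) can run in parallel.

Every permutation of `[m]^d` is realized in `3^(d+1) m` rounds. Write `[m]^(d+1) = [m] × [m]^d`.
König's edge-colouring theorem factors a permutation of a product as `u v w`, where `u` and `w`
move points only inside the fibres `{a} × [m]^d` (routed recursively, in parallel) and `v` only
along the lines `[m] × {b}` (a Clos network). A line of length `n` is sorted in `3 n` rounds:
within `n` rounds the sites bound for the upper half are pushed up there by a totally asymmetric
exclusion process, and then the two halves are sorted recursively, in parallel.
-/

/-- Two cubes of `R_N` are adjacent if they share a `(ν-1)`-dimensional face. -/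
def CubeAdjacent {ν N : ℕ} (κ κ' : Fin ν → Fin N) : Prop :=
  ∃ j, (∀ i, i ≠ j → κ i = κ' i) ∧
    (((κ j : ℕ) + 1 = (κ' j : ℕ)) ∨ ((κ' j : ℕ) + 1 = (κ j : ℕ)))

/-- An S-elementary movement: an involution simultaneously swapping disjoint pairs of
adjacent cubes. -/
def IsSElem {ν N : ℕ} (S : Equiv.Perm (Fin ν → Fin N)) : Prop :=
  ∀ κ, S (S κ) = κ ∧ (S κ = κ ∨ CubeAdjacent κ (S κ))

/-- The number of pairs simultaneously swapped. -/
def swapCt {ν N : ℕ} (S : Equiv.Perm (Fin ν → Fin N)) : ℕ :=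
  (Finset.univ.filter fun κ => S κ ≠ κ).card / 2

open Equiv Finset SimpleGraph
open scoped Pointwise

lemma MonoidHom.mapsTo_pow {M N : Type*} [Monoid M] [Monoid N] (φ : M →* N) {s : Set M}
    {t : Set N} (h : Set.MapsTo φ s t) (n : ℕ) : Set.MapsTo φ (s ^ n) (t ^ n) := fun _ hx =>
  Set.pow_subset_pow_left h.image_subset (Set.image_pow φ s n ▸ Set.mem_image_of_mem φ hx)

section Rounds

variable {V W : Type*} {adj : V → V → Prop} {R : ℕ}

/-- A round of a discrete flow: simultaneous swaps of disjoint pairs of adjacent points.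
The permutations realized by flows of `R` rounds are those in `rounds adj ^ R`. -/
def rounds (adj : V → V → Prop) : Set (Perm V) :=
  {S | ∀ x, S (S x) = x ∧ (S x = x ∨ adj x (S x))}

lemma one_mem_rounds : (1 : Perm V) ∈ rounds adj := fun _ => ⟨rfl, Or.inl rfl⟩

lemma one_mem_rounds_pow : (1 : Perm V) ∈ rounds adj ^ R := Set.one_mem_pow one_mem_rounds

lemma rounds_pow_mono {R' : ℕ} (h : R ≤ R') : rounds adj ^ R ⊆ rounds adj ^ R' :=
  Set.pow_subset_pow_right one_mem_rounds h

lemma mem_rounds_pow_of_subsingleton [Subsingleton V] (σ : Perm V) : σ ∈ rounds adj ^ R :=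
  Subsingleton.elim 1 σ ▸ one_mem_rounds_pow

lemma permCongr_mem_rounds_pow {adjW : W → W → Prop} (e : V ≃ W)
    (he : ∀ x y, adj x y → adjW (e x) (e y)) {σ : Perm V} (hσ : σ ∈ rounds adj ^ R) :
    e.permCongr σ ∈ rounds adjW ^ R := by
  refine e.permCongrHom.toMonoidHom.mapsTo_pow (s := rounds adj) (fun S hS => ?_) R hσ
  intro y
  obtain ⟨hinv, hadj⟩ := hS (e.symm y)
  simp only [MulEquiv.coe_toMonoidHom, permCongrHom_coe, permCongr_apply, symm_apply_apply, hinv,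
    apply_symm_apply, true_and]
  rcases hadj with h | h
  · exact Or.inl (by rw [h, apply_symm_apply])
  · exact Or.inr (by simpa using he _ _ h)

lemma sumCongr_mem_rounds_pow {A B : Type*} {adjA : A → A → Prop} {adjB : B → B → Prop}
    {α : Perm A} {β : Perm B} (hα : α ∈ rounds adjA ^ R) (hβ : β ∈ rounds adjB ^ R) :
    Perm.sumCongr α β ∈ rounds (Sum.LiftRel adjA adjB) ^ R := by
  refine (Perm.sumCongrHom A B).mapsTo_pow (s := rounds adjA ×ˢ rounds adjB)
    (t := rounds (Sum.LiftRel adjA adjB)) ?_ R (x := (α, β)) (by rw [Set.prod_pow]; exact ⟨hα, hβ⟩)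
  rintro ⟨S, T⟩ ⟨hS, hT⟩ (a | b)
  · rcases hS a with ⟨h1, h2 | h2⟩ <;> simp [h1, h2]
  · rcases hT b with ⟨h1, h2 | h2⟩ <;> simp [h1, h2]

lemma prodCongrRight_mem_rounds_pow {A B : Type*} {adjB : B → B → Prop} {α : A → Perm B}
    (hα : ∀ a, α a ∈ rounds adjB ^ R) :
    prodCongrRight α ∈ rounds (fun x y : A × B => x.1 = y.1 ∧ adjB x.2 y.2) ^ R := by
  induction R generalizing α with
  | zero =>
    simp only [pow_zero, Set.mem_one] at hα ⊢
    ext x <;> simp [hα]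
  | succ R ih =>
    simp only [pow_succ, Set.mem_mul] at hα ⊢
    choose S hS T hT hST using hα
    refine ⟨prodCongrRight S, ih hS, prodCongrRight T, fun ⟨a, b⟩ => ?_, ?_⟩
    · rcases hT a b with ⟨h1, h2 | h2⟩ <;> simp [h1, h2]
    · ext x <;> simp [← hST]

lemma prodCongrLeft_mem_rounds_pow {A B : Type*} {adjA : A → A → Prop} {γ : B → Perm A}
    (hγ : ∀ b, γ b ∈ rounds adjA ^ R) :
    prodCongrLeft γ ∈ rounds (fun x y : A × B => adjA x.1 y.1 ∧ x.2 = y.2) ^ R := by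
  have := permCongr_mem_rounds_pow (prodComm B A)
    (adjW := fun x y : A × B => adjA x.1 y.1 ∧ x.2 = y.2) (fun x y h => ⟨h.2, h.1⟩)
    (prodCongrRight_mem_rounds_pow hγ)
  convert this using 1
  ext x <;> rfl

end Rounds

lemma exists_prodCongrRight_eq {A B : Type*} (σ : Perm (A × B)) (hσ : ∀ x, (σ x).1 = x.1) :
    ∃ α : A → Perm B, σ = prodCongrRight α := by
  have hσ' : ∀ x, (σ⁻¹ x).1 = x.1 := fun x => by simpa using (hσ (σ⁻¹ x)).symm
  have hmk : ∀ (τ : Perm (A × B)), (∀ x, (τ x).1 = x.1) → ∀ a b, (a, (τ (a, b)).2) = τ (a, b) :=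
    fun τ h a b => Prod.ext (h (a, b)).symm rfl
  refine ⟨fun a => ⟨fun b => (σ (a, b)).2, fun b => (σ⁻¹ (a, b)).2, fun b => ?_, fun b => ?_⟩, ?_⟩
  · show (σ⁻¹ (a, (σ (a, b)).2)).2 = b
    simp [hmk σ hσ]
  · show (σ (a, (σ⁻¹ (a, b)).2)).2 = b
    rw [hmk _ hσ']
    simp
  · ext x <;> simp [hσ]

section EdgeColoring

variable {E A : Type*} [DecidableEq A]

lemma exists_perfectMatching_of_regular (F : Finset E) (l r : E → A) {d : ℕ} (hd : 0 < d)
    (hl : ∀ a, #{e ∈ F | l e = a} = d) (hr : ∀ a, #{e ∈ F | r e = a} = d) :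
    ∃ μ : A → E, (∀ a, μ a ∈ F ∧ l (μ a) = a) ∧ Function.Injective (r ∘ μ) := by
  set t : A → Finset A := fun a => {e ∈ F | l e = a}.image r
  -- Hall's condition, by counting the `d * #S` edges leaving `S` at their right endpoints
  have hall : ∀ S : Finset A, #S ≤ #(S.biUnion t) := by
    intro S
    have hlow : d * #S ≤ #{e ∈ F | l e ∈ S} :=
      mul_card_image_le_card_of_maps_to (f := l) (fun e he => (mem_filter.1 he).2) d
        (fun a ha => by rw [filter_filter, ← hl a]; congr! 2; grind)
    have hup : #{e ∈ F | l e ∈ S} ≤ d * #(S.biUnion t) :=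
      card_le_mul_card_image_of_maps_to (f := r)
        (fun e he => mem_biUnion.2 ⟨l e, (mem_filter.1 he).2, mem_image_of_mem r (by grind)⟩) d
        (fun a _ => (hr a) ▸ card_le_card (filter_subset_filter _ (filter_subset _ F)))
    exact Nat.le_of_mul_le_mul_left (hlow.trans hup) hd
  obtain ⟨f, hf, hft⟩ := (all_card_le_biUnion_card_iff_exists_injective t).1 hall
  choose μ hμ hμf using fun a => mem_image.1 (hft a)
  refine ⟨μ, fun a => mem_filter.1 (hμ a), fun a b h => hf ?_⟩
  simpa [hμf] using h

variable [DecidableEq E] [Fintype A]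

lemma card_filter_sdiff_image_eq {F : Finset E} {l : E → A} {μ : A → E}
    (hμ : ∀ a, μ a ∈ F) {a b : A} (hb : l (μ b) = a) (hinj : ∀ b', l (μ b') = a → b' = b) :
    #{e ∈ F \ univ.image μ | l e = a} = #{e ∈ F | l e = a} - 1 := by
  rw [← card_erase_of_mem (s := {e ∈ F | l e = a}) (mem_filter.2 ⟨hμ b, hb⟩)]
  congr 1
  ext e
  simp only [mem_filter, mem_sdiff, mem_image, mem_univ, true_and, mem_erase, not_exists]
  constructor
  · rintro ⟨⟨he, hne⟩, rfl⟩
    exact ⟨fun h => hne b h.symm, he, rfl⟩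
  · rintro ⟨hne, he, rfl⟩
    exact ⟨⟨he, fun b' h => hne (by rw [← h, hinj b' (by rw [h])])⟩, rfl⟩

/-- König's theorem: a `d`-regular bipartite multigraph, with edge set `F` and endpoint maps
`l` and `r`, has a proper edge colouring with `d` colours. -/
theorem exists_edgeColoring_of_regular (l r : E → A) (d : ℕ) (F : Finset E)
    (hl : ∀ a, #{e ∈ F | l e = a} = d) (hr : ∀ a, #{e ∈ F | r e = a} = d) :
    ∃ c : E → ℕ, (∀ e ∈ F, c e < d) ∧
      ∀ e ∈ F, ∀ e' ∈ F, c e = c e' → l e = l e' ∨ r e = r e' → e = e' := by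
  induction d generalizing F with
  | zero =>
    have hF : F = ∅ := eq_empty_of_forall_notMem fun e he =>
      filter_eq_empty_iff.1 (card_eq_zero.1 (hl (l e))) he rfl
    exact ⟨fun _ => 0, by simp [hF], by simp [hF]⟩
  | succ d ih =>
    obtain ⟨μ, hμ, hμr⟩ := exists_perfectMatching_of_regular F l r d.succ_pos hl hr
    obtain ⟨c, hcd, hc⟩ := ih (F \ univ.image μ)
      (fun a => by rw [card_filter_sdiff_image_eq (fun a => (hμ a).1) (hμ a).2
        (fun b h => (h.symm.trans (hμ b).2).symm ▸ rfl), hl, Nat.add_sub_cancel])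
      (fun a => by
        obtain ⟨b, hb⟩ := Finite.injective_iff_surjective.1 hμr a
        rw [card_filter_sdiff_image_eq (fun a => (hμ a).1) hb
          (fun b' h => hμr (h.trans hb.symm)), hr, Nat.add_sub_cancel])
    refine ⟨fun e => if e ∈ univ.image μ then d else c e, fun e he => ?_,
      fun e he e' he' hee' h => ?_⟩
    · dsimp only
      split_ifs with hm
      · exact d.lt_succ_self
      · exact (hcd e (mem_sdiff.2 ⟨he, hm⟩)).trans d.lt_succ_self
    · by_cases hm : e ∈ univ.image μ <;> by_cases hm' : e' ∈ univ.image μ <;>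
        simp only [hm, hm', if_true, if_false] at hee'
      · obtain ⟨a, -, rfl⟩ := mem_image.1 hm
        obtain ⟨a', -, rfl⟩ := mem_image.1 hm'
        rcases h with h | h
        · rw [(hμ a).2, (hμ a').2] at h; rw [h]
        · rw [hμr h]
      · exact absurd hee' (hcd e' (mem_sdiff.2 ⟨he', hm'⟩)).ne'
      · exact absurd hee' (hcd e (mem_sdiff.2 ⟨he, hm⟩)).ne
      · exact hc e (mem_sdiff.2 ⟨he, hm⟩) e' (mem_sdiff.2 ⟨he', hm'⟩) hee' h

end EdgeColoring

/-- König's colouring of the multigraph with an edge `a → (σ (a, b)).1` for every `(a, b)`,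
with the colours read in `B`. -/
lemma exists_coloring_of_perm_prod {A B : Type*} [Fintype A] [DecidableEq A] [Fintype B]
    [DecidableEq B] (σ : Perm (A × B)) :
    ∃ κ : A × B → B, ∀ x y, κ x = κ y → x.1 = y.1 ∨ (σ x).1 = (σ y).1 → x = y := by
  have hfib : ∀ a, #{x ∈ (univ : Finset (A × B)) | x.1 = a} = Fintype.card B := fun a => by
    rw [show {x ∈ (univ : Finset (A × B)) | x.1 = a} = {a} ×ˢ univ by ext ⟨a', b⟩; simp [eq_comm]]
    simp
  obtain ⟨c, hcB, hc⟩ := exists_edgeColoring_of_regular (Prod.fst : A × B → A) (fun x => (σ x).1)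
    (Fintype.card B) univ hfib (fun a => (card_equiv σ fun x => by simp).trans (hfib a))
  exact ⟨fun x => (Fintype.equivFin B).symm ⟨c x, hcB x (mem_univ x)⟩, fun x y h h' =>
    hc x (mem_univ x) y (mem_univ y) (by simpa using h) h'⟩

/-- Clos network factorisation: the colour of `x` becomes its second coordinate after the first
stage `prodCongrRight β`. -/
theorem exists_prodCongr_factorization {A B : Type*} [Fintype A] [DecidableEq A] [Fintype B]
    [DecidableEq B] (σ : Perm (A × B)) :
    ∃ (α β : A → Perm B) (γ : B → Perm A),
      σ = prodCongrRight α * prodCongrLeft γ * prodCongrRight β := by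
  obtain ⟨κ, hκ⟩ := exists_coloring_of_perm_prod σ
  set β : A → Perm B := fun a => ofBijective (fun b => κ (a, b))
    (Finite.injective_iff_bijective.1 fun b b' h => by simpa using hκ _ _ h (Or.inl rfl))
  have hβ : ∀ x, prodCongrRight β x = (x.1, κ x) := fun x => rfl
  have hβ_inv : ∀ p, (((prodCongrRight β)⁻¹ p).1, κ ((prodCongrRight β)⁻¹ p)) = p := fun p => by
    rw [← hβ, Perm.coe_inv, apply_symm_apply]
  set γ : B → Perm A := fun b => ofBijective (fun a => (σ ((prodCongrRight β)⁻¹ (a, b))).1)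
    (Finite.injective_iff_bijective.1 fun a a' h => by
      have hκb : κ ((prodCongrRight β)⁻¹ (a, b)) = κ ((prodCongrRight β)⁻¹ (a', b)) :=
        (congrArg Prod.snd (hβ_inv (a, b))).trans (congrArg Prod.snd (hβ_inv (a', b))).symm
      exact (Prod.ext_iff.1 ((prodCongrRight β)⁻¹.injective (hκ _ _ hκb (Or.inr h)))).1)
  have hγβ : ∀ x, prodCongrLeft γ (prodCongrRight β x) = ((σ x).1, κ x) := fun x => by
    rw [hβ, prodCongrLeft_apply]
    congr
    show (σ ((prodCongrRight β)⁻¹ (x.1, κ x))).1 = _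
    rw [← hβ, Perm.coe_inv, symm_apply_apply]
  obtain ⟨α, hα⟩ := exists_prodCongrRight_eq (σ * (prodCongrLeft γ * prodCongrRight β)⁻¹)
      fun x => by
    have := hγβ ((prodCongrLeft γ * prodCongrRight β)⁻¹ x)
    rw [← Perm.mul_apply, Perm.coe_inv, apply_symm_apply] at this
    exact (congrArg Prod.fst this).symm
  refine ⟨α, β, γ, ?_⟩
  rw [← hα]
  group

section SwapSucc

variable {n : ℕ} {D : Set ℕ}

open Classical in
noncomputable def swapSuccFun (n : ℕ) (D : Set ℕ) (x : Fin n) : Fin n :=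
  if h : (x : ℕ) ∈ D ∧ (x : ℕ) + 1 < n then ⟨x + 1, h.2⟩
  else if h' : 0 < (x : ℕ) ∧ (x : ℕ) - 1 ∈ D then ⟨x - 1, by omega⟩ else x

lemma swapSuccFun_involutive (hD : ∀ x ∈ D, x + 1 ∉ D) :
    Function.Involutive (swapSuccFun n D) := by
  intro x
  by_cases h : (x : ℕ) ∈ D ∧ (x : ℕ) + 1 < n
  · have h' : (x : ℕ) + 1 ∉ D := hD _ h.1
    simp [swapSuccFun, h, h']
  · by_cases h2 : 0 < (x : ℕ) ∧ (x : ℕ) - 1 ∈ D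
    · have hx : (x : ℕ) - 1 + 1 = x := by omega
      simp [swapSuccFun, h, h2, hx]
    · simp [swapSuccFun, h, h2]

noncomputable def swapSucc (n : ℕ) (D : Set ℕ) (hD : ∀ x ∈ D, x + 1 ∉ D) : Perm (Fin n) :=
  (swapSuccFun_involutive hD).toPerm

variable {hD : ∀ x ∈ D, x + 1 ∉ D}

lemma swapSucc_mem_rounds : swapSucc n D hD ∈ rounds (pathGraph n).Adj := by
  refine fun x => ⟨(swapSuccFun_involutive hD) x, ?_⟩
  simp only [swapSucc, Function.Involutive.coe_toPerm, swapSuccFun, pathGraph_adj]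
  split_ifs <;> simp [Fin.ext_iff]
  omega

lemma swapSucc_apply_of_mem {x : Fin n} (hx : (x : ℕ) ∈ D) (hn : (x : ℕ) + 1 < n) :
    (swapSucc n D hD x : ℕ) = x + 1 := by
  simp [swapSucc, swapSuccFun, hx, hn]

lemma swapSucc_apply_of_forall_ne {x : Fin n} (hx : (x : ℕ) ∉ D) (hx' : ∀ y ∈ D, y + 1 ≠ x) :
    swapSucc n D hD x = x := by
  have : ¬ (0 < (x : ℕ) ∧ (x : ℕ) - 1 ∈ D) := fun h => hx' _ h.2 (by omega)
  simp [swapSucc, swapSuccFun, hx, this]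

end SwapSucc

section Tasep

variable {n : ℕ} (M : Finset (Fin n))

def numAbove (p : Fin n) : ℕ := #{q ∈ M | p < q}

variable {M}

lemma val_add_numAbove_lt (p : Fin n) : (p : ℕ) + numAbove M p < n := by
  have : numAbove M p ≤ n - 1 - p :=
    Fin.card_Ioi p ▸ card_le_card fun q hq => Finset.mem_Ioi.2 (mem_filter.1 hq).2
  omega

lemma numAbove_lt_of_lt {p p' : Fin n} (hp : p ∈ M) (h : p' < p) :
    numAbove M p < numAbove M p' :=
  card_lt_card <| (ssubset_iff_of_subset fun q hq => by
    simp only [mem_filter] at hq ⊢; exact ⟨hq.1, h.trans hq.2⟩).2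
    ⟨p, by simp [hp, h], by simp⟩

lemma numAbove_le_add (p p' : Fin n) :
    numAbove M p' ≤ numAbove M p + (p - p') := by
  calc numAbove M p' ≤ #({q ∈ M | p < q} ∪ Finset.Ioc p' p) := card_le_card fun q hq => by
        simp only [mem_filter] at hq
        simp only [mem_union, mem_filter, Finset.mem_Ioc]
        by_cases hq' : p < q
        · exact Or.inl ⟨hq.1, hq'⟩
        · exact Or.inr ⟨hq.2, not_lt.1 hq'⟩
    _ ≤ numAbove M p + #(Finset.Ioc p' p) := card_union_le _ _
    _ = numAbove M p + (p - p') := by rw [Fin.card_Ioc]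

lemma numAbove_lt_card {p : Fin n} (hp : p ∈ M) : numAbove M p < #M :=
  card_lt_card <| (ssubset_iff_of_subset (filter_subset _ M)).2 ⟨p, hp, by simp⟩

variable (M) in
/-- The position at time `t` of the particle starting at the marked site `p`: it waits
`numAbove M p` rounds, then climbs one step per round until it reaches its final position
`n - 1 - numAbove M p`. -/
def tasepPos (t : ℕ) (p : Fin n) : ℕ := min (n - 1 - numAbove M p) (p + (t - numAbove M p))

/-- Why the swaps of a round are disjoint: particles keep their order, and a moving particle
has a free site above it. -/
lemma tasepPos_lt_of_lt {p p' : Fin n} (hp : p ∈ M) (h : p' < p) (t : ℕ) :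
    tasepPos M t p' < tasepPos M t p ∧
      (tasepPos M (t + 1) p' = tasepPos M t p' + 1 → tasepPos M t p' + 1 < tasepPos M t p) := by
  have h1 := val_add_numAbove_lt (M := M) p
  have h2 := val_add_numAbove_lt (M := M) p'
  have h3 := numAbove_lt_of_lt hp h
  have h4 := numAbove_le_add (M := M) p p'
  have h5 : (p' : ℕ) < p := h
  simp only [tasepPos]
  omega

variable (M) in
def tasepMovers (t : ℕ) : Set ℕ :=
  {x | ∃ p ∈ M, tasepPos M (t + 1) p = tasepPos M t p + 1 ∧ x = tasepPos M t p}

lemma add_one_notMem_tasepMovers (t : ℕ) : ∀ x ∈ tasepMovers M t, x + 1 ∉ tasepMovers M t := by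
  rintro _ ⟨p, hp, hmove, rfl⟩ ⟨p', hp', -, hp'x⟩
  rcases lt_trichotomy p p' with h | rfl | h
  · have := (tasepPos_lt_of_lt hp' h t).2 hmove
    omega
  · omega
  · have := (tasepPos_lt_of_lt hp h t).1
    omega

variable (M) in
noncomputable def tasepRound (t : ℕ) : Perm (Fin n) :=
  swapSucc n (tasepMovers M t) (add_one_notMem_tasepMovers t)

lemma tasepRound_apply {p : Fin n} (hp : p ∈ M) {t : ℕ} {x : Fin n}
    (hx : (x : ℕ) = tasepPos M t p) : (tasepRound M t x : ℕ) = tasepPos M (t + 1) p := by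
  by_cases hmove : tasepPos M (t + 1) p = tasepPos M t p + 1
  · have hn : (x : ℕ) + 1 < n := by
      have := val_add_numAbove_lt (M := M) p
      have : tasepPos M (t + 1) p ≤ n - 1 - numAbove M p := min_le_left _ _
      omega
    have hx' : (x : ℕ) ∈ tasepMovers M t := ⟨p, hp, hmove, hx⟩
    rw [tasepRound, swapSucc_apply_of_mem hx' hn, hx, hmove]
  · have hstay : tasepPos M (t + 1) p = tasepPos M t p := by
      simp only [tasepPos] at hmove ⊢
      omega
    rw [tasepRound, swapSucc_apply_of_forall_ne, hx, hstay]
    · rintro ⟨p', hp', hmove', hp'x⟩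
      rcases lt_trichotomy p p' with h | rfl | h
      · have := (tasepPos_lt_of_lt hp' h t).1
        omega
      · exact hmove hmove'
      · have := (tasepPos_lt_of_lt hp h t).1
        omega
    · rintro _ ⟨p', hp', hmove', rfl⟩
      rcases lt_trichotomy p p' with h | rfl | h
      · have := (tasepPos_lt_of_lt hp' h t).1
        omega
      · exact fun _ => hmove hmove'
      · have := (tasepPos_lt_of_lt hp h t).2 hmove'
        omega

variable (M) in
noncomputable def tasep : ℕ → Perm (Fin n)
  | 0 => 1
  | t + 1 => tasepRound M t * tasep t

lemma tasep_mem_rounds_pow (t : ℕ) : tasep M t ∈ rounds (pathGraph n).Adj ^ t := by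
  induction t with
  | zero => exact one_mem_rounds_pow
  | succ t ih => exact pow_succ' (rounds _) t ▸ Set.mul_mem_mul swapSucc_mem_rounds ih

lemma tasep_apply {p : Fin n} (hp : p ∈ M) (t : ℕ) : (tasep M t p : ℕ) = tasepPos M t p := by
  induction t with
  | zero =>
    have := val_add_numAbove_lt (M := M) p
    simp only [tasep, Perm.one_apply, tasepPos]
    omega
  | succ t ih => exact tasepRound_apply hp ih

theorem exists_mem_rounds_pow_marked_to_top (M : Finset (Fin n)) :
    ∃ π ∈ rounds (pathGraph n).Adj ^ n, ∀ p ∈ M, n ≤ π p + #M := by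
  refine ⟨tasep M n, tasep_mem_rounds_pow n, fun p hp => ?_⟩
  have h1 := val_add_numAbove_lt (M := M) p
  have h2 := numAbove_lt_card hp
  rw [tasep_apply hp, tasepPos]
  omega

end Tasep

lemma pathGraph_adj_finSumFinEquiv {h k : ℕ} {x y : Fin h ⊕ Fin k}
    (hxy : Sum.LiftRel (pathGraph h).Adj (pathGraph k).Adj x y) :
    (pathGraph (h + k)).Adj (finSumFinEquiv x) (finSumFinEquiv y) := by
  rcases hxy with ⟨hxy⟩ | ⟨hxy⟩ <;> simp only [pathGraph_adj] at hxy ⊢ <;> simp <;> omega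

lemma card_filter_le_val_apply {h k : ℕ} (σ : Perm (Fin (h + k))) :
    #{x | h ≤ (σ x : ℕ)} = k := by
  have hlow : #{x | (σ x : ℕ) < h} = h := by
    rw [card_equiv σ (t := {y : Fin (h + k) | (y : ℕ) < h}) (by simp), Fin.card_filter_val_lt]
    omega
  have := card_filter_add_card_filter_not (s := univ) fun x => (σ x : ℕ) < h
  simp only [not_lt, card_univ, Fintype.card_fin] at this
  omega

theorem mem_rounds_pow_of_halves {h k R : ℕ}
    (hh : ∀ σ : Perm (Fin h), σ ∈ rounds (pathGraph h).Adj ^ R)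
    (hk : ∀ σ : Perm (Fin k), σ ∈ rounds (pathGraph k).Adj ^ R) (σ : Perm (Fin (h + k))) :
    σ ∈ rounds (pathGraph (h + k)).Adj ^ (R + (h + k)) := by
  have hM := card_filter_le_val_apply σ
  obtain ⟨π, hπ, hπM⟩ := exists_mem_rounds_pow_marked_to_top {x | h ≤ (σ x : ℕ)}
  obtain ⟨⟨α, β⟩, hαβ⟩ := Perm.mem_sumCongrHom_range_of_perm_mapsTo_inl
    (σ := finSumFinEquiv.symm.permCongr (σ * π⁻¹)) (by
      rintro _ ⟨a, rfl⟩
      have hlt : ((σ * π⁻¹) (Fin.castAdd k a) : ℕ) < h := by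
        by_contra hge
        have := hπM _ (mem_filter.2 ⟨mem_univ _, not_lt.1 hge⟩)
        simp only [hM, Perm.coe_inv, apply_symm_apply, Fin.val_castAdd] at this
        omega
      refine ⟨⟨_, hlt⟩, ?_⟩
      rw [permCongr_apply, symm_symm, finSumFinEquiv_apply_left,
        ← finSumFinEquiv_symm_apply_castAdd]
      rfl)
  have hτ : σ * π⁻¹ ∈ rounds (pathGraph (h + k)).Adj ^ R := by
    have := permCongr_mem_rounds_pow finSumFinEquiv (fun x y => pathGraph_adj_finSumFinEquiv)
      (sumCongr_mem_rounds_pow (hh α) (hk β))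
    simp only [Perm.sumCongrHom_apply] at hαβ
    convert this using 1
    rw [hαβ]
    ext
    simp
  simpa [pow_add] using Set.mul_mem_mul hτ hπ

theorem mem_rounds_pow_pathGraph (n : ℕ) (σ : Perm (Fin n)) :
    σ ∈ rounds (pathGraph n).Adj ^ (3 * n) := by
  induction n using Nat.strong_induction_on with
  | _ n ih =>
  rcases le_or_gt n 1 with hn | hn
  · have := Fin.subsingleton_iff_le_one.2 hn
    exact mem_rounds_pow_of_subsingleton σ
  · obtain ⟨h, k, rfl, hh, hhk, hkh⟩ : ∃ h k, n = h + k ∧ 0 < h ∧ h ≤ k ∧ k ≤ h + 1 :=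
      ⟨n / 2, n - n / 2, by omega, by omega, by omega, by omega⟩
    exact rounds_pow_mono (by omega) <| mem_rounds_pow_of_halves (R := 3 * k)
      (fun τ => rounds_pow_mono (by omega) (ih h (by omega) τ)) (ih k (by omega)) σ

lemma cubeAdjacent_cons_right {d m : ℕ} (a : Fin m) {r r' : Fin d → Fin m}
    (h : CubeAdjacent r r') :
    CubeAdjacent (Fin.cons a r : Fin (d + 1) → Fin m) (Fin.cons a r') := by
  obtain ⟨j, hj, hadj⟩ := h
  refine ⟨j.succ, fun i hi => ?_, by simpa using hadj⟩
  cases i using Fin.cases with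
  | zero => rfl
  | succ i => simpa using hj i (fun h => hi (h ▸ rfl))

lemma cubeAdjacent_cons_left {d m : ℕ} {a a' : Fin m} (r : Fin d → Fin m)
    (h : (pathGraph m).Adj a a') :
    CubeAdjacent (Fin.cons a r : Fin (d + 1) → Fin m) (Fin.cons a' r) := by
  refine ⟨0, fun i hi => ?_, by simpa [pathGraph_adj] using h⟩
  cases i using Fin.cases with
  | zero => exact absurd rfl hi
  | succ i => simp

theorem mem_rounds_pow_cube (m d : ℕ) (σ : Perm (Fin d → Fin m)) :
    σ ∈ rounds CubeAdjacent ^ (3 ^ (d + 1) * m) := by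
  induction d with
  | zero => exact mem_rounds_pow_of_subsingleton σ
  | succ d ih =>
    let e := Fin.consEquiv fun _ : Fin (d + 1) => Fin m
    have hright : ∀ α : Fin m → Perm (Fin d → Fin m),
        e.permCongr (prodCongrRight α) ∈ rounds CubeAdjacent ^ (3 ^ (d + 1) * m) := fun α =>
      permCongr_mem_rounds_pow e (fun ⟨a, r⟩ ⟨a', r'⟩ ⟨(haa' : a = a'), hrr'⟩ => by
          subst haa'; exact cubeAdjacent_cons_right a hrr')
        (prodCongrRight_mem_rounds_pow fun a => ih (α a))
    have hleft : ∀ γ : (Fin d → Fin m) → Perm (Fin m),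
        e.permCongr (prodCongrLeft γ) ∈ rounds CubeAdjacent ^ (3 * m) := fun γ =>
      permCongr_mem_rounds_pow e (fun ⟨a, r⟩ ⟨a', r'⟩ ⟨haa', (hrr' : r = r')⟩ => by
          subst hrr'; exact cubeAdjacent_cons_left r haa')
        (prodCongrLeft_mem_rounds_pow fun b => mem_rounds_pow_pathGraph m (γ b))
    obtain ⟨α, β, γ, hσ⟩ := exists_prodCongr_factorization (e.symm.permCongr σ)
    have hσ' : σ = e.permCongr (prodCongrRight α) * e.permCongr (prodCongrLeft γ) *
        e.permCongr (prodCongrRight β) := by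
      rw [← permCongrHom_coe, ← map_mul, ← map_mul, ← hσ, permCongrHom_coe]
      ext; simp
    have hR : 3 ^ (d + 1) * m + 3 * m + 3 ^ (d + 1) * m ≤ 3 ^ (d + 1 + 1) * m := by
      have : 3 ≤ 3 ^ (d + 1) := Nat.le_self_pow d.succ_ne_zero 3
      rw [pow_succ 3 (d + 1)]
      nlinarith [Nat.mul_le_mul_right m this]
    rw [hσ']
    refine rounds_pow_mono hR ?_
    rw [pow_add, pow_add]
    exact Set.mul_mem_mul (Set.mul_mem_mul (hright α) (hleft γ)) (hright β)

/-- Coordinatewise `x ↦ (x / m, x % m)`: a site of the fine grid is a coarse cube together with a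
site inside it. -/
def coarseFineEquiv (ν Q m : ℕ) : (Fin ν → Fin Q) × (Fin ν → Fin m) ≃ (Fin ν → Fin (Q * m)) :=
  (arrowProdEquivProdArrow _ _ _).symm.trans (piCongrRight fun _ => finProdFinEquiv)

lemma coarseFineEquiv_apply_val {ν Q m : ℕ} (x : (Fin ν → Fin Q) × (Fin ν → Fin m)) (j : Fin ν) :
    (coarseFineEquiv ν Q m x j : ℕ) = x.2 j + m * x.1 j := rfl

lemma coarseFineEquiv_symm_apply_fst_val {ν Q m : ℕ} (κ : Fin ν → Fin (Q * m)) (j : Fin ν) :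
    (((coarseFineEquiv ν Q m).symm κ).1 j : ℕ) = κ j / m := rfl

lemma cubeAdjacent_coarseFineEquiv {ν Q m : ℕ} {x y : (Fin ν → Fin Q) × (Fin ν → Fin m)}
    (h : x.1 = y.1 ∧ CubeAdjacent x.2 y.2) :
    CubeAdjacent (coarseFineEquiv ν Q m x) (coarseFineEquiv ν Q m y) := by
  obtain ⟨hxy, j, hj, hadj⟩ := h
  refine ⟨j, fun i hi => Fin.ext ?_, ?_⟩ <;> simp only [coarseFineEquiv_apply_val, hxy]
  · rw [hj i hi]
  · omega

theorem mem_rounds_pow_of_div_eq {ν Q m : ℕ} (σ : Perm (Fin ν → Fin (Q * m)))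
    (hσ : ∀ κ j, (σ κ j : ℕ) / m = (κ j : ℕ) / m) :
    σ ∈ rounds CubeAdjacent ^ (3 ^ (ν + 1) * m) := by
  set e := coarseFineEquiv ν Q m
  obtain ⟨α, hα⟩ := exists_prodCongrRight_eq (e.symm.permCongr σ) fun x => by
    funext j
    apply Fin.ext
    rw [permCongr_apply, symm_symm, coarseFineEquiv_symm_apply_fst_val, hσ,
      coarseFineEquiv_apply_val, Nat.add_mul_div_left _ _ (x.2 j).pos, Nat.div_eq_of_lt (x.2 j).2,
      zero_add]
  have := permCongr_mem_rounds_pow e (fun x y => cubeAdjacent_coarseFineEquiv)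
    (prodCongrRight_mem_rounds_pow fun a => mem_rounds_pow_cube m ν (α a))
  rwa [← hα, ← permCongr_symm, apply_symm_apply] at this

lemma isSElem_iff {ν N : ℕ} {S : Perm (Fin ν → Fin N)} : IsSElem S ↔ S ∈ rounds CubeAdjacent :=
  Iff.rfl

lemma swapCt_le {ν N : ℕ} (S : Perm (Fin ν → Fin N)) : swapCt S ≤ N ^ ν :=
  calc swapCt S ≤ #{κ | S κ ≠ κ} := Nat.div_le_self _ 2
    _ ≤ #(univ : Finset (Fin ν → Fin N)) := card_filter_le _ _
    _ = N ^ ν := by simp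

lemma rpow_mul_sqrt_swapCt_le {ν N : ℕ} (hN : 0 < N) (S : Perm (Fin ν → Fin N)) :
    (N : ℝ) ^ (-1 - (ν : ℝ) / 2) * Real.sqrt (swapCt S) ≤ (N : ℝ)⁻¹ := by
  have hN' : (0 : ℝ) < N := Nat.cast_pos.2 hN
  calc (N : ℝ) ^ (-1 - (ν : ℝ) / 2) * Real.sqrt (swapCt S)
      ≤ (N : ℝ) ^ (-1 - (ν : ℝ) / 2) * Real.sqrt ((N : ℝ) ^ (ν : ℝ)) := by
        gcongr
        exact_mod_cast swapCt_le S
    _ = (N : ℝ)⁻¹ := by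
        rw [Real.sqrt_eq_rpow, ← Real.rpow_mul hN'.le, ← Real.rpow_add hN', ← Real.rpow_neg_one]
        ring_nf

lemma sum_map_rpow_mul_sqrt_swapCt_le {ν N : ℕ} (hN : 0 < N) (L : List (Perm (Fin ν → Fin N))) :
    (L.map fun S => (N : ℝ) ^ (-1 - (ν : ℝ) / 2) * Real.sqrt (swapCt S)).sum ≤
      L.length * (N : ℝ)⁻¹ := by
  have := List.sum_le_card_nsmul
    (L.map fun S => (N : ℝ) ^ (-1 - (ν : ℝ) / 2) * Real.sqrt (swapCt S)) (N : ℝ)⁻¹ fun c hc => by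
      obtain ⟨S, -, rfl⟩ := List.mem_map.1 hc
      exact rpow_mul_sqrt_swapCt_le hN S
  simpa using this

theorem stmt12_general (ν : ℕ) :
    ∃ C : ℝ, 0 < C ∧ ∀ (N m : ℕ) (δ ε : ℝ) (P : Equiv.Perm (Fin ν → Fin N)),
      0 < N → 0 < m → m ∣ N → 0 < δ → δ < 1 → 0 < ε →
      (m : ℝ) = δ ^ ε * N →
      (∀ (κ : Fin ν → Fin N) (j : Fin ν), (P κ j : ℕ) / m = (κ j : ℕ) / m) →
      ∃ L : List (Equiv.Perm (Fin ν → Fin N)),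
        (∀ S ∈ L, IsSElem S) ∧ L.prod = P⁻¹ ∧
        (L.map fun S => (N : ℝ) ^ (-1 - (ν : ℝ) / 2) * Real.sqrt (swapCt S)).sum
          ≤ C * δ ^ ε := by
  refine ⟨3 ^ (ν + 1), by positivity, fun N m δ ε P hN _ hdvd _ _ _ hmN hP => ?_⟩
  obtain ⟨Q, rfl⟩ := dvd_iff_exists_eq_mul_left.1 hdvd
  obtain ⟨f, hf⟩ := Set.mem_pow.1 <| mem_rounds_pow_of_div_eq P⁻¹ fun κ j => by
    simpa using (hP (P⁻¹ κ) j).symm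
  refine ⟨List.ofFn fun i => (f i : Perm (Fin ν → Fin (Q * m))), fun S hS => ?_, hf, ?_⟩
  · obtain ⟨i, rfl⟩ := List.mem_ofFn.1 hS
    exact isSElem_iff.2 (f i).2
  refine (sum_map_rpow_mul_sqrt_swapCt_le hN _).trans_eq ?_
  rw [List.length_ofFn, Nat.cast_mul, Nat.cast_pow, Nat.cast_ofNat, mul_assoc, hmN]
  field_simp

/-- If a permutation of `R_N` is constant on the coarser tiling into cubes of side
`δ^ε = m/N` (each fine cube stays in its coarse cube), then its Shnirelman discrete distance
to the identity is at most `C(ν) δ^ε`: there is a connecting discrete flow of that cost. -/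
theorem stmt12 (ν : ℕ) (hν : 1 ≤ ν) :
    ∃ C : ℝ, 0 < C ∧ ∀ (N m : ℕ) (δ ε : ℝ) (P : Equiv.Perm (Fin ν → Fin N)),
      0 < N → 0 < m → m ∣ N → 0 < δ → δ < 1 → 0 < ε →
      (m : ℝ) = δ ^ ε * N →
      (∀ (κ : Fin ν → Fin N) (j : Fin ν), (P κ j : ℕ) / m = (κ j : ℕ) / m) →
      ∃ L : List (Equiv.Perm (Fin ν → Fin N)),
        (∀ S ∈ L, IsSElem S) ∧ L.prod = P⁻¹ ∧
        (L.map fun S => (N : ℝ) ^ (-1 - (ν : ℝ) / 2) * Real.sqrt (swapCt S)).sum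
          ≤ C * δ ^ ε :=
  stmt12_general ν
end
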